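/- The map sending each k-element subset a of X (|X| = ks) to the projective point p_a embeds CR(X,k,s) into the projective space PG(ks-2, F): distinct points of CR(X,k,s) map to distinct projective points, each block maps to s points spanning a projective subspace of dimension s-2, and distinct blocks map to distinct (s-2)-subspaces. -/

import Mathlib

/-- The representing vector of the projective point `p_c`: for a subset `c` of
`X = {0,…,n-1}` it is `Σ_{j∈c} e j` when `0 ∉ c`, and (using `p_c = p_{X∖c}`)
`Σ_{j∈cᶜ} e j` when `0 ∈ c`. -/
def pVec {V : Type*} [AddCommMonoid V] {n : ℕ} [NeZero n]
    (e : Fin n → V) (c : Finset (Fin n)) : V :=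
  if (0 : Fin n) ∈ c then ∑ j ∈ cᶜ, e j else ∑ j ∈ c, e j

/-- `CRPart k s B` : `B` is a block of `CR(X,k,s)` with `|X| = ks`, i.e. a partition of
`X = Fin (ks)` into `s` pairwise disjoint `k`-element subsets. -/
def CRPart {n : ℕ} (k s : ℕ) (B : Finset (Finset (Fin n))) : Prop :=
  B.card = s ∧ (∀ c ∈ B, c.card = k) ∧
    (∀ c ∈ B, ∀ c' ∈ B, c ≠ c' → Disjoint c c') ∧
    B.biUnion id = Finset.univ

/-! The vectors `e 1, …, e (n-1)` are independent, and `p_a` is represented by the sum of the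
`e j` over whichever of `a`, `X ∖ a` avoids `0`. Comparing coefficients, such a sum over a set `c`
lies in the span of the sums over a disjoint family `D` only if every point of `c` lies in a
member of `D` contained in `c`. In a block `B`, the member `c₀ ∋ 0` has
`p_{c₀} = Σ_{c ∈ B, c ≠ c₀} p_c`, so the span of the block is spanned by the `s - 1` independent
sums over the other members, and by the criterion above it determines those members, hence `B`.
The bound `s ≥ 3` gives `k ≠ ks - k`, which makes `a ↦ p_a` injective on `k`-sets. -/

open Submodule

namespace LinearIndepOn

variable {ι F V : Type*} [Field F] [AddCommGroup V] [Module F V] {v : ι → V} {s : Set ι}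

theorem exists_linearMap_apply_eq_single (hv : LinearIndepOn F v s) :
    ∃ π : V →ₗ[F] ι →₀ F, ∀ j ∈ s, π (v j) = Finsupp.single j 1 := by
  obtain ⟨g, hg⟩ := LinearMap.exists_extend hv.repr
  refine ⟨(Finsupp.lmapDomain F F Subtype.val).comp g, fun j hj ↦ ?_⟩
  have hvj : v j ∈ span F (Set.range fun x : s ↦ v x) := subset_span ⟨⟨j, hj⟩, rfl⟩
  have := LinearMap.congr_fun hg ⟨v j, hvj⟩
  simp only [LinearMap.comp_apply, coe_subtype] at this
  simp [this, hv.repr_eq_single ⟨j, hj⟩ ⟨v j, hvj⟩ rfl]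

theorem exists_mem_subset_of_sum_mem_span (hv : LinearIndepOn F v s)
    {D : Finset (Finset ι)} (hDs : ∀ d ∈ D, ↑d ⊆ s) (hD : (D : Set (Finset ι)).PairwiseDisjoint id)
    {c : Finset ι} (hcs : ↑c ⊆ s) (hc : ∑ j ∈ c, v j ∈ span F ((fun d ↦ ∑ j ∈ d, v j) '' D))
    {i : ι} (hi : i ∈ c) : ∃ d ∈ D, i ∈ d ∧ d ⊆ c := by
  classical
  obtain ⟨π, hπ⟩ := hv.exists_linearMap_apply_eq_single
  have hπ_sum : ∀ {c : Finset ι}, ↑c ⊆ s → ∀ j,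
      π (∑ j ∈ c, v j) j = if j ∈ c then 1 else 0 := by
    intro c hcs j
    rw [map_sum, Finsupp.finsetSum_apply,
      Finset.sum_congr rfl fun j' hj' ↦ by rw [hπ j' (hcs hj')]]
    simp [Finsupp.single_apply]
  obtain ⟨g, hg⟩ := (mem_span_image_finset_iff_exists_fun' F).1 hc
  have hcoord : ∀ j ∈ s,
      (if j ∈ c then 1 else 0 : F) = ∑ d ∈ D, g d * if j ∈ d then 1 else 0 := by
    intro j hj
    rw [← hπ_sum hcs, ← hg, map_sum, Finsupp.finsetSum_apply]
    refine Finset.sum_congr rfl fun d hd ↦ ?_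
    rw [map_smul, Finsupp.smul_apply, hπ_sum (hDs d hd), smul_eq_mul]
  have hsum_single : ∀ d ∈ D, ∀ j ∈ d, ∑ d' ∈ D, g d' * (if j ∈ d' then 1 else 0) = g d := by
    intro d hd j hj
    rw [Finset.sum_eq_single_of_mem d hd, if_pos hj, mul_one]
    intro d' hd' hne
    have hdisj : Disjoint d d' := hD hd hd' hne.symm
    rw [if_neg (Finset.disjoint_left.1 hdisj hj), mul_zero]
  obtain ⟨d, hd, hid⟩ : ∃ d ∈ D, i ∈ d := by
    by_contra! h
    have := hcoord i (hcs hi)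
    rw [if_pos hi, Finset.sum_eq_zero fun d hd ↦ by rw [if_neg (h d hd), mul_zero]] at this
    exact one_ne_zero this
  have hgd : g d = 1 := by rw [← hsum_single d hd i hid, ← hcoord i (hcs hi), if_pos hi]
  refine ⟨d, hd, hid, fun j hj ↦ ?_⟩
  have := hcoord j (hDs d hd hj)
  rw [hsum_single d hd j hj, hgd] at this
  by_contra hjc
  simp [hjc] at this

theorem sum_linearIndepOn (hv : LinearIndepOn F v s)
    {D : Finset (Finset ι)} (hDs : ∀ d ∈ D, ↑d ⊆ s) (hD : (D : Set (Finset ι)).PairwiseDisjoint id)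
    (hne : ∀ d ∈ D, d.Nonempty) : LinearIndepOn F (fun d ↦ ∑ j ∈ d, v j) D := by
  classical
  refine linearIndepOn_iff_notMem_span.2 fun d hd hmem ↦ ?_
  obtain ⟨i, hi⟩ := hne d hd
  rw [← Finset.coe_singleton, ← Finset.coe_sdiff, Finset.sdiff_singleton_eq_erase] at hmem
  obtain ⟨d', hd', hid', -⟩ := hv.exists_mem_subset_of_sum_mem_span
    (fun d' hd' ↦ hDs d' (Finset.mem_of_mem_erase hd')) (hD.subset (by simp)) (hDs d hd) hmem hi
  have hdisj : Disjoint d d' :=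
    hD hd (Finset.mem_of_mem_erase hd') (Finset.ne_of_mem_erase hd').symm
  exact Finset.disjoint_left.1 hdisj hi hid'

theorem subset_of_span_sum_le (hv : LinearIndepOn F v s) {k : ℕ} (hk : 0 < k)
    {D₁ D₂ : Finset (Finset ι)} (hD₁s : ∀ d ∈ D₁, ↑d ⊆ s) (hD₂s : ∀ d ∈ D₂, ↑d ⊆ s)
    (hD₂ : (D₂ : Set (Finset ι)).PairwiseDisjoint id)
    (hD₁k : ∀ d ∈ D₁, d.card = k) (hD₂k : ∀ d ∈ D₂, d.card = k)
    (hle : span F ((fun d ↦ ∑ j ∈ d, v j) '' D₁) ≤ span F ((fun d ↦ ∑ j ∈ d, v j) '' D₂)) :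
    D₁ ⊆ D₂ := by
  intro c hc
  obtain ⟨i, hi⟩ := Finset.card_pos.1 (hD₁k c hc ▸ hk)
  obtain ⟨d, hd, -, hdc⟩ := hv.exists_mem_subset_of_sum_mem_span hD₂s hD₂ (hD₁s c hc)
    (hle (subset_span ⟨c, hc, rfl⟩)) hi
  rwa [← Finset.eq_of_subset_of_card_le hdc (by rw [hD₁k c hc, hD₂k d hd])]

end LinearIndepOn

theorem finrank_span_image_finset_eq_card {α F V : Type*} [Field F] [AddCommGroup V] [Module F V]
    [DecidableEq V] {w : α → V} {D : Finset α} (hw : LinearIndepOn F w D) :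
    Module.finrank F (span F (w '' D)) = D.card := by
  rw [← Finset.coe_image, finrank_span_finset_eq_card (by simpa using hw.id_image),
    Finset.card_image_of_injOn hw.injOn]

theorem Finset.biUnion_erase_eq_compl {α : Type*} [Fintype α] [DecidableEq α]
    {B : Finset (Finset α)} (hB : (B : Set (Finset α)).PairwiseDisjoint id)
    (hcover : B.biUnion id = univ) {c : Finset α} (hc : c ∈ B) :
    (B.erase c).biUnion id = cᶜ := by
  ext i
  simp only [mem_biUnion, mem_erase, id, mem_compl]
  constructor
  · rintro ⟨d, ⟨hdc, hd⟩, hid⟩ hic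
    have hdisj : Disjoint d c := hB hd hc hdc
    exact Finset.disjoint_left.1 hdisj hid hic
  · intro hic
    obtain ⟨d, hd, hid⟩ := mem_biUnion.1 (hcover ▸ mem_univ i)
    exact ⟨d, ⟨fun hdc ↦ hic (hdc ▸ hid), hd⟩, hid⟩

theorem CRPart.pairwiseDisjoint {n k s : ℕ} {B : Finset (Finset (Fin n))} (hB : CRPart k s B) :
    (B : Set (Finset (Fin n))).PairwiseDisjoint id :=
  fun c hc c' hc' h ↦ hB.2.2.1 c hc c' hc' h

section pVec

variable {F V : Type*} [Field F] [AddCommGroup V] [Module F V] {n : ℕ} [NeZero n] {e : Fin n → V}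

/-- The support of `pVec e c` with respect to `e 1, …, e (n-1)`. -/
def pSupport (c : Finset (Fin n)) : Finset (Fin n) :=
  if (0 : Fin n) ∈ c then cᶜ else c

theorem pVec_eq_sum_pSupport (c : Finset (Fin n)) : pVec e c = ∑ j ∈ pSupport c, e j := by
  unfold pVec pSupport
  split_ifs <;> rfl

theorem pSupport_of_zero_notMem {c : Finset (Fin n)} (h : (0 : Fin n) ∉ c) : pSupport c = c :=
  if_neg h

theorem coe_pSupport_subset (c : Finset (Fin n)) : ↑(pSupport c) ⊆ {i : Fin n | i ≠ 0} := by
  intro i hi hi0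
  subst hi0
  unfold pSupport at hi
  split_ifs at hi with h <;> simp_all

theorem pSupport_nonempty {c : Finset (Fin n)} (h₀ : 0 < c.card) (hn : c.card < n) :
    (pSupport c).Nonempty := by
  rw [← Finset.card_pos]
  unfold pSupport
  split_ifs
  · rw [Finset.card_compl, Fintype.card_fin]; omega
  · exact h₀

theorem eq_of_pSupport_eq {k : ℕ} (hkn : 2 * k ≠ n) {a b : Finset (Fin n)}
    (ha : a.card = k) (hb : b.card = k) (h : pSupport a = pSupport b) : a = b := by
  have hcard := congrArg Finset.card h
  unfold pSupport at h hcard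
  split_ifs at h hcard with h0a h0b h0b
  · exact compl_injective h
  · rw [Finset.card_compl, Fintype.card_fin] at hcard; omega
  · rw [Finset.card_compl, Fintype.card_fin] at hcard; omega
  · exact h

theorem pSupport_subset_of_pVec_mem_span (hli : LinearIndepOn F e {i | i ≠ 0})
    {a b : Finset (Fin n)} (ha : (pSupport a).Nonempty) (h : pVec e a ∈ span F {pVec e b}) :
    pSupport b ⊆ pSupport a := by
  obtain ⟨i, hi⟩ := ha
  rw [pVec_eq_sum_pSupport, pVec_eq_sum_pSupport,
    ← Set.image_singleton (f := fun d ↦ ∑ j ∈ d, e j), ← Finset.coe_singleton] at h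
  obtain ⟨d, hd, -, hsub⟩ := hli.exists_mem_subset_of_sum_mem_span
    (by simpa using coe_pSupport_subset b) (by simp) (coe_pSupport_subset a) h hi
  rwa [Finset.mem_singleton.1 hd] at hsub

theorem eq_of_span_pVec_eq (hli : LinearIndepOn F e {i | i ≠ 0}) {k : ℕ} (hk : 0 < k)
    (hkn : 2 * k < n) {a b : Finset (Fin n)} (ha : a.card = k) (hb : b.card = k)
    (h : span F {pVec e a} = span F {pVec e b}) : a = b := by
  refine eq_of_pSupport_eq hkn.ne ha hb (subset_antisymm ?_ ?_)
  · exact pSupport_subset_of_pVec_mem_span hli (pSupport_nonempty (by omega) (by omega))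
      (h ▸ mem_span_singleton_self _)
  · exact pSupport_subset_of_pVec_mem_span hli (pSupport_nonempty (by omega) (by omega))
      (h.symm ▸ mem_span_singleton_self _)

namespace CRPart

variable {k s : ℕ} {B B₁ B₂ : Finset (Finset (Fin n))} {c₀ : Finset (Fin n)}

theorem exists_zero_mem (hB : CRPart k s B) : ∃ c₀ ∈ B, (0 : Fin n) ∈ c₀ := by
  have h0 : (0 : Fin n) ∈ B.biUnion id := by
    rw [hB.2.2.2]
    exact Finset.mem_univ _
  simpa using h0

theorem coe_subset_of_mem_erase (hB : CRPart k s B) (hc₀B : c₀ ∈ B) (hc₀ : (0 : Fin n) ∈ c₀)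
    {d : Finset (Fin n)} (hd : d ∈ B.erase c₀) : ↑d ⊆ {i : Fin n | i ≠ 0} := by
  intro i hi hi0
  have : i ∈ c₀ᶜ := Finset.biUnion_erase_eq_compl hB.pairwiseDisjoint hB.2.2.2 hc₀B ▸
    Finset.mem_biUnion.2 ⟨d, hd, hi⟩
  exact Finset.mem_compl.1 this (hi0 ▸ hc₀)

theorem span_pVec_image (hB : CRPart k s B) (hc₀B : c₀ ∈ B) (hc₀ : (0 : Fin n) ∈ c₀) :
    span F (pVec e '' B) = span F ((fun d ↦ ∑ j ∈ d, e j) '' (B.erase c₀)) := by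
  have hc₀_sum : pVec e c₀ = ∑ d ∈ B.erase c₀, ∑ j ∈ d, e j := by
    rw [pVec, if_pos hc₀, ← Finset.biUnion_erase_eq_compl hB.pairwiseDisjoint hB.2.2.2 hc₀B,
      Finset.sum_biUnion (hB.pairwiseDisjoint.subset (by simp))]
    rfl
  have hrest : pVec e '' (B.erase c₀) = (fun d ↦ ∑ j ∈ d, e j) '' (B.erase c₀) :=
    Set.image_congr fun d hd ↦ by
      rw [pVec_eq_sum_pSupport, pSupport_of_zero_notMem fun h0 ↦
        hB.coe_subset_of_mem_erase hc₀B hc₀ hd h0 rfl]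
  have hc₀_mem : pVec e c₀ ∈ span F ((fun d ↦ ∑ j ∈ d, e j) '' (B.erase c₀)) :=
    hc₀_sum ▸ sum_mem fun d hd ↦ subset_span ⟨d, hd, rfl⟩
  rw [← span_insert_eq_span hc₀_mem, ← hrest, ← Set.image_insert_eq, ← Finset.coe_insert,
    Finset.insert_erase hc₀B]

theorem finrank_span_pVec_image (hli : LinearIndepOn F e {i | i ≠ 0}) (hk : 0 < k)
    (hB : CRPart k s B) : Module.finrank F (span F (pVec e '' B)) = s - 1 := by
  classical
  obtain ⟨c₀, hc₀B, hc₀⟩ := hB.exists_zero_mem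
  rw [hB.span_pVec_image hc₀B hc₀, finrank_span_image_finset_eq_card
    (hli.sum_linearIndepOn (fun d ↦ hB.coe_subset_of_mem_erase hc₀B hc₀)
      (hB.pairwiseDisjoint.subset (by simp)) fun d hd ↦
        Finset.card_pos.1 (hB.2.1 d (Finset.mem_of_mem_erase hd) ▸ hk)),
    Finset.card_erase_of_mem hc₀B, hB.1]

theorem erase_subset_of_span_le (hli : LinearIndepOn F e {i | i ≠ 0}) (hk : 0 < k)
    (hB₁ : CRPart k s B₁) (hB₂ : CRPart k s B₂) {c₁ c₂ : Finset (Fin n)}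
    (hc₁B : c₁ ∈ B₁) (hc₁ : (0 : Fin n) ∈ c₁) (hc₂B : c₂ ∈ B₂) (hc₂ : (0 : Fin n) ∈ c₂)
    (h : span F (pVec e '' B₁) ≤ span F (pVec e '' B₂)) : B₁.erase c₁ ⊆ B₂.erase c₂ := by
  rw [hB₁.span_pVec_image hc₁B hc₁, hB₂.span_pVec_image hc₂B hc₂] at h
  exact hli.subset_of_span_sum_le hk (fun d ↦ hB₁.coe_subset_of_mem_erase hc₁B hc₁)
    (fun d ↦ hB₂.coe_subset_of_mem_erase hc₂B hc₂) (hB₂.pairwiseDisjoint.subset (by simp))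
    (fun d hd ↦ hB₁.2.1 d (Finset.mem_of_mem_erase hd))
    (fun d hd ↦ hB₂.2.1 d (Finset.mem_of_mem_erase hd)) h

theorem eq_of_span_pVec_image_eq (hli : LinearIndepOn F e {i | i ≠ 0}) (hk : 0 < k)
    (hB₁ : CRPart k s B₁) (hB₂ : CRPart k s B₂)
    (h : span F (pVec e '' B₁) = span F (pVec e '' B₂)) : B₁ = B₂ := by
  obtain ⟨c₁, hc₁B, hc₁⟩ := hB₁.exists_zero_mem
  obtain ⟨c₂, hc₂B, hc₂⟩ := hB₂.exists_zero_mem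
  have hrest : B₁.erase c₁ = B₂.erase c₂ := subset_antisymm
    (erase_subset_of_span_le hli hk hB₁ hB₂ hc₁B hc₁ hc₂B hc₂ h.le)
    (erase_subset_of_span_le hli hk hB₂ hB₁ hc₂B hc₂ hc₁B hc₁ h.ge)
  have hc : c₁ = c₂ := compl_injective <| by
    rw [← Finset.biUnion_erase_eq_compl hB₁.pairwiseDisjoint hB₁.2.2.2 hc₁B,
      ← Finset.biUnion_erase_eq_compl hB₂.pairwiseDisjoint hB₂.2.2.2 hc₂B, hrest]
  rw [← Finset.insert_erase hc₁B, ← Finset.insert_erase hc₂B, hrest, hc]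

end CRPart

end pVec

theorem cr_embedding_general {F V : Type*} [Field F] [AddCommGroup V] [Module F V] [DecidableEq V]
    (k s n : ℕ) (hk : 0 < k) (hs : 3 ≤ s) (hn : n = k * s) [NeZero n]
    (e : Fin n → V)
    (hli : LinearIndependent F (fun i : {i : Fin n // i ≠ 0} => e i.1)) :
    (∀ a b : Finset (Fin n), a.card = k → b.card = k →
        Submodule.span F {pVec e a} = Submodule.span F {pVec e b} → a = b) ∧
      (∀ B : Finset (Finset (Fin n)), CRPart k s B →
        (B.image (pVec e)).card = s ∧
          Module.finrank F ↥(Submodule.span F (pVec e '' ↑B)) = s - 1) ∧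
      (∀ B₁ B₂ : Finset (Finset (Fin n)), CRPart k s B₁ → CRPart k s B₂ →
        Submodule.span F (pVec e '' ↑B₁) = Submodule.span F (pVec e '' ↑B₂) → B₁ = B₂) := by
  have hli : LinearIndepOn F e {i | i ≠ 0} := hli
  have hkn : 2 * k < n := by rw [hn]; nlinarith
  have hpoints := fun a b ↦ eq_of_span_pVec_eq hli hk hkn (a := a) (b := b)
  refine ⟨hpoints, fun B hB ↦ ⟨?_, hB.finrank_span_pVec_image hli hk⟩,
    fun B₁ B₂ hB₁ hB₂ ↦ CRPart.eq_of_span_pVec_image_eq hli hk hB₁ hB₂⟩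
  rw [Finset.card_image_of_injOn fun a ha b hb hab ↦
    hpoints a b (hB.2.1 a ha) (hB.2.1 b hb) (by rw [hab]), hB.1]

/-- The map `a ↦ p_a` embeds `CR(X,k,s)` (`|X| = ks`) into `PG(ks-2,F)`:
distinct points go to distinct projective points, each block goes to `s` points spanning
a subspace of projective dimension `s-2` (vector dimension `s-1`), and distinct blocks
go to distinct `(s-2)`-subspaces. -/
theorem cr_embedding {F V : Type*} [Field F] [AddCommGroup V] [Module F V] [DecidableEq V]
    (k s n : ℕ) (hk : 0 < k) (hs : 3 ≤ s) (hn : n = k * s) [NeZero n]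
    (e : Fin n → V)
    (hli : LinearIndependent F (fun i : {i : Fin n // i ≠ 0} => e i.1))
    (h0 : e 0 = ∑ i ∈ Finset.univ.erase (0 : Fin n), e i) :
    (∀ a b : Finset (Fin n), a.card = k → b.card = k →
        Submodule.span F {pVec e a} = Submodule.span F {pVec e b} → a = b) ∧
      (∀ B : Finset (Finset (Fin n)), CRPart k s B →
        (B.image (pVec e)).card = s ∧
          Module.finrank F ↥(Submodule.span F (pVec e '' ↑B)) = s - 1) ∧
      (∀ B₁ B₂ : Finset (Finset (Fin n)), CRPart k s B₁ → CRPart k s B₂ →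
        Submodule.span F (pVec e '' ↑B₁) = Submodule.span F (pVec e '' ↑B₂) → B₁ = B₂) :=
  cr_embedding_general k s n hk hs hn e hli
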